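/- Let b ≥ 2 and r ≥ 1 be integers, and let n be an integer with n ≥ b^r − 1. Then the sum of the base-b digits of Λ_n = lcm(1, 2, …, n) satisfies s_b(Λ_n) ≥ (b−1)·r. -/

import Mathlib

/-!
`Λ_n` is a positive multiple of `b ^ r - 1`. If `m = b ^ r * q + s` with `s < b ^ r`, then
`q + s ≡ m` modulo `b ^ r - 1`, and `s_b(q + s) ≤ s_b(q) + s_b(s) = s_b(m)` because `s_b` is
subadditive and the base-`b` expansion of `m` is that of `s` followed by that of `q`. Folding
`m` in this way strictly decreases it until it reaches `b ^ r - 1` itself, whose `r` digits all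
equal `b - 1`.
-/

open Finset

namespace Nat

variable {b : ℕ}

theorem sub_one_mul_sum_div_pow_add_digits_sum (hb : 1 < b) {n K : ℕ} (hK : log b n < K) :
    (b - 1) * ∑ i ∈ range K, n / b ^ (i + 1) + (b.digits n).sum = n := by
  have hsum :
      ∑ i ∈ range (log b n).succ, n / b ^ (i + 1) = ∑ i ∈ range K, n / b ^ (i + 1) :=
    sum_subset (range_subset_range.mpr hK) fun i _ hi ↦
      div_eq_of_lt (lt_pow_of_log_lt hb (by simp at hi; omega))
  have := sub_one_mul_sum_log_div_pow_eq_sub_sum_digits (p := b) n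
  have := digit_sum_le b n
  rw [hsum] at *
  omega

/-- The defect `s(x) + s(y) - s(x + y)` is `b - 1` times the number of carries. -/
theorem digits_sum_add_le (hb : 1 < b) (x y : ℕ) :
    (b.digits (x + y)).sum ≤ (b.digits x).sum + (b.digits y).sum := by
  set K := log b (x + y) + 1
  have hx := sub_one_mul_sum_div_pow_add_digits_sum hb
    (n := x) (K := K) (by have := log_mono_right (b := b) (le_add_right x y); omega)
  have hy := sub_one_mul_sum_div_pow_add_digits_sum hb
    (n := y) (K := K) (by have := log_mono_right (b := b) (le_add_left y x); omega)
  have hxy := sub_one_mul_sum_div_pow_add_digits_sum hb (n := x + y) (K := K) (by omega)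
  have hfloor : ∑ i ∈ range K, x / b ^ (i + 1) + ∑ i ∈ range K, y / b ^ (i + 1) ≤
      ∑ i ∈ range K, (x + y) / b ^ (i + 1) := by
    rw [← sum_add_distrib]
    exact sum_le_sum fun i _ ↦ div_add_div_le_add_div
  have := Nat.mul_le_mul_left (b - 1) hfloor
  rw [Nat.mul_add] at this
  omega

theorem digits_sum_mod_add_div_pow (hb : 1 < b) (m r : ℕ) :
    (b.digits m).sum = (b.digits (m % b ^ r)).sum + (b.digits (m / b ^ r)).sum := by
  rcases eq_zero_or_pos (m / b ^ r) with hq | hq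
  · rw [hq, mod_eq_of_lt ((div_eq_zero_iff_lt (by positivity)).mp hq)]
    simp
  have hlen : (b.digits (m % b ^ r)).length ≤ r :=
    (digits_length_le_iff hb _).mpr (mod_lt _ (by positivity))
  have hsplit := digits_append_zeroes_append_digits (n := m % b ^ r)
    (k := r - (b.digits (m % b ^ r)).length) hb hq
  rw [Nat.add_sub_cancel' hlen, mod_add_div] at hsplit
  simp [← hsplit]

theorem digits_sum_pow_sub_one (hb : 1 < b) (r : ℕ) :
    (b.digits (b ^ r - 1)).sum = (b - 1) * r := by
  induction r with
  | zero => simp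
  | succ r ih =>
    have hpow : b ^ (r + 1) - 1 = (b - 1) + b * (b ^ r - 1) := by
      have := one_le_pow r b (by omega)
      rw [pow_succ', Nat.mul_sub_one]
      have := Nat.mul_le_mul_left b this
      omega
    rw [hpow, digits_add b hb _ _ (by omega) (Or.inl (by omega)), List.sum_cons, ih]
    ring

theorem digits_sum_div_add_mod_le (hb : 1 < b) (m r : ℕ) :
    (b.digits (m / b ^ r + m % b ^ r)).sum ≤ (b.digits m).sum :=
  (digits_sum_add_le hb _ _).trans (digits_sum_mod_add_div_pow hb m r ▸ (add_comm _ _).le)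

theorem sub_one_dvd_div_add_mod {k m : ℕ} (h : k - 1 ∣ m) : k - 1 ∣ m / k + m % k := by
  rcases k with _ | k
  · simpa using h
  have hm : m = k * (m / (k + 1)) + (m / (k + 1) + m % (k + 1)) := by
    have := div_add_mod m (k + 1)
    linarith
  rw [Nat.add_sub_cancel] at h ⊢
  rw [hm] at h
  exact (Nat.dvd_add_right (dvd_mul_right k _)).mp h

theorem sub_one_mul_le_digits_sum_of_dvd (hb : 1 < b) {r m : ℕ} (hm : m ≠ 0)
    (hdvd : b ^ r - 1 ∣ m) : (b - 1) * r ≤ (b.digits m).sum := by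
  induction m using Nat.strong_induction_on with
  | _ m ih =>
  have hN : b ^ r - 1 ≤ m := le_of_dvd (pos_of_ne_zero hm) hdvd
  rcases lt_or_ge m (b ^ r) with hlt | hge
  · rw [show m = b ^ r - 1 by omega, digits_sum_pow_sub_one hb]
  have hpow : 2 ≤ b ^ r := by
    by_contra! h
    exact hm (eq_zero_of_zero_dvd (by rwa [show b ^ r - 1 = 0 by omega] at hdvd))
  have hq : 1 ≤ m / b ^ r := (one_le_div_iff (by omega)).mpr hge
  have hfold : m / b ^ r + m % b ^ r < m := by
    have := div_add_mod m (b ^ r)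
    nlinarith
  exact (ih _ hfold (Nat.add_pos_left hq _).ne' (sub_one_dvd_div_add_mod hdvd)).trans
    (digits_sum_div_add_mod_le hb m r)

end Nat

theorem stmt_9_general (b r n : ℕ) (hb : 2 ≤ b)
    (hn : n ≥ b ^ r - 1) :
    (Nat.digits b ((Finset.Icc 1 n).lcm id)).sum ≥ (b - 1) * r := by
  rcases Nat.eq_zero_or_pos r with rfl | hr
  · simp
  have hmem : b ^ r - 1 ∈ Icc 1 n := by
    have := Nat.one_lt_pow hr.ne' hb
    rw [mem_Icc]
    omega
  have hlcm : (Icc 1 n).lcm id ≠ 0 :=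
    lcm_ne_zero_iff.mpr fun x hx ↦ Nat.one_le_iff_ne_zero.mp (mem_Icc.mp hx).1
  exact Nat.sub_one_mul_le_digits_sum_of_dvd hb hlcm (dvd_lcm (f := id) hmem)

theorem stmt_9 (b r n : ℕ) (hb : 2 ≤ b) (hr : 1 ≤ r)
    (hn : n ≥ b ^ r - 1) :
    (Nat.digits b ((Finset.Icc 1 n).lcm id)).sum ≥ (b - 1) * r :=
  stmt_9_general b r n hb hn
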